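/- arXiv:1003.5341 — 5 statements merged into one kernel-verified Lean document; each statement's English description precedes it below -/
import Mathlib

section
/- Let f : X → S¹ be a locally injective continuous map from a connected compact Hausdorff space X onto the circle S¹. Then X is metrizable. -/
/-!
Cover X by finitely many open sets on which f is injective and take a partition of unity ρ
subordinate to this cover. Then x ↦ (f x, ρ x) is injective, since a point x with ρᵢ x ≠ 0 and a
point with the same image both lie in the i-th set. A continuous injection of a compact space into
the metrizable space Y × ℝⁿ is an embedding, so X is metrizable.
-/

open Set Function TopologicalSpace

theorem PartitionOfUnity.injective_prodMk_of_isSubordinate {ι X Y : Type*} [TopologicalSpace X]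
    (ρ : PartitionOfUnity ι X) {O : ι → Set X} (hρ : ρ.IsSubordinate O) {f : X → Y}
    (hf : ∀ i, InjOn f (O i)) : Injective fun x => (f x, fun i => ρ i x) := by
  intro x y hxy
  simp only [Prod.mk.injEq, funext_iff] at hxy
  obtain ⟨i, hi⟩ := ρ.exists_pos (mem_univ x)
  have mem_of_ne_zero : ∀ z, ρ i z ≠ 0 → z ∈ O i := fun z hz => hρ i (subset_tsupport _ hz)
  exact hf i (mem_of_ne_zero x hi.ne') (mem_of_ne_zero y (hxy.2 i ▸ hi.ne')) hxy.1

theorem metrizableSpace_of_continuous_locallyInjective {X Y : Type*} [TopologicalSpace X]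
    [CompactSpace X] [T2Space X] [TopologicalSpace Y] [MetrizableSpace Y] {f : X → Y}
    (hf : Continuous f) (hli : ∀ x, ∃ O : Set X, IsOpen O ∧ x ∈ O ∧ InjOn f O) :
    MetrizableSpace X := by
  choose O hO_open hO_mem hO_inj using hli
  obtain ⟨t, ht⟩ := isCompact_univ.elim_finite_subcover O hO_open
    fun x _ => mem_iUnion.2 ⟨x, hO_mem x⟩
  obtain ⟨ρ, hρ⟩ := PartitionOfUnity.exists_isSubordinate isClosed_univ
    (fun i : t => O i) (fun i => hO_open i) (by simpa [iUnion_subtype] using ht)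
  have hΦ : Continuous fun x => (f x, fun i : t => ρ i x) :=
    hf.prodMk (continuous_pi fun i => (ρ i).continuous)
  exact (hΦ.isClosedEmbedding
    (ρ.injective_prodMk_of_isSubordinate hρ fun i => hO_inj i)).isEmbedding.metrizableSpace

theorem stmt6_general {X : Type*} [TopologicalSpace X] [CompactSpace X] [T2Space X]
    (f : X → Metric.sphere (0 : ℂ) 1) (hf : Continuous f)
    (hli : ∀ x : X, ∃ O : Set X, IsOpen O ∧ x ∈ O ∧ Set.InjOn f O) :
    TopologicalSpace.MetrizableSpace X :=
  metrizableSpace_of_continuous_locallyInjective hf hli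

/-- A locally injective continuous surjection from a continuum onto the
circle S¹ forces the domain to be metrizable. -/
theorem stmt6 {X : Type*} [TopologicalSpace X] [CompactSpace X] [T2Space X]
    [ConnectedSpace X] (f : X → Metric.sphere (0 : ℂ) 1) (hf : Continuous f)
    (hsurj : Function.Surjective f)
    (hli : ∀ x : X, ∃ O : Set X, IsOpen O ∧ x ∈ O ∧ Set.InjOn f O) :
    TopologicalSpace.MetrizableSpace X :=
  stmt6_general f hf hli
end

section
/- Let f : X → S¹ be a locally injective continuous surjection from a metrizable continuum X onto the circle. Then X is locally connected. -/
/-!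
Composing `f` with the charts `z ↦ arg (z * conj u)` of the circle, every point `x` of `X` has a
closed neighbourhood `N` on which some continuous `g : X → ℝ` is injective. If `N ≠ X`, then `g`
stays at distance `η > 0` from `g x` on the frontier of `N`. By boundary bumping, the component of
`N` through any `y` near `x` reaches that frontier, so its `g`-image is an interval through
`g x + η` or `g x - η`. These values have at most two preimages in `N`, and the components of `N`
through them are closed, so those not containing `x` stay away from `x`. Hence the component of `x`
in `N` is a connected neighbourhood of `x`.
-/

open Set Filter Topology Metric

section Components

variable {X : Type*} [TopologicalSpace X]

theorem IsClosed.connectedComponentIn {N : Set X} (hN : IsClosed N) (x : X) :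
    IsClosed (connectedComponentIn N x) := by
  by_cases hx : x ∈ N
  · refine closure_subset_iff_isClosed.mp <| isPreconnected_connectedComponentIn.closure
      |>.subset_connectedComponentIn (subset_closure (mem_connectedComponentIn hx))
      (closure_minimal (connectedComponentIn_subset N x) hN)
  · rw [connectedComponentIn_eq_empty hx]
    exact isClosed_empty

theorem mem_connectedComponentIn_comm {N : Set X} {y z : X} (h : z ∈ connectedComponentIn N y) :
    y ∈ connectedComponentIn N z :=
  connectedComponentIn_eq h ▸ mem_connectedComponentIn (connectedComponentIn_nonempty_iff.mp ⟨z, h⟩)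

theorem eventually_mem_connectedComponentIn_imp {N : Set X} (hN : IsClosed N) (x z : X) :
    ∀ᶠ y in 𝓝 x, z ∈ connectedComponentIn N y → z ∈ connectedComponentIn N x := by
  by_cases hz : z ∈ connectedComponentIn N x
  · exact Eventually.of_forall fun _ _ => hz
  · have hx : x ∉ connectedComponentIn N z := fun hx => hz (mem_connectedComponentIn_comm hx)
    filter_upwards [(hN.connectedComponentIn z).isOpen_compl.mem_nhds hx] with y hy hzy
    exact absurd (mem_connectedComponentIn_comm hzy) hy

variable [CompactSpace X] [T2Space X]

theorem exists_isClopen_of_connectedComponent_subset {x : X} {U : Set X} (hU : IsOpen U)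
    (h : connectedComponent x ⊆ U) : ∃ V, IsClopen V ∧ x ∈ V ∧ V ⊆ U := by
  rw [connectedComponent_eq_iInter_isClopen, ← disjoint_compl_right_iff_subset,
    disjoint_iff_inter_eq_empty] at h
  obtain ⟨t, ht⟩ := hU.isClosed_compl.isCompact.elim_finite_subfamily_closed _
    (fun s : {s : Set X // IsClopen s ∧ x ∈ s} => s.2.1.1) (by rwa [inter_comm] at h)
  refine ⟨⋂ s ∈ t, s, isClopen_biInter_finset fun s _ => s.2.1, mem_iInter₂.2 fun s _ => s.2.2, ?_⟩
  rwa [inter_comm, ← disjoint_iff_inter_eq_empty, disjoint_compl_right_iff_subset] at ht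

-- Boundary bumping.
theorem connectedComponentIn_inter_frontier_nonempty [PreconnectedSpace X] {N : Set X}
    (hN : IsClosed N) (hNU : N ≠ univ) {y : X} (hy : y ∈ N) :
    (connectedComponentIn N y ∩ frontier N).Nonempty := by
  by_contra hdisj
  have : CompactSpace N := isCompact_iff_compactSpace.mp hN.isCompact
  obtain ⟨V, hV, hyV, hVU⟩ := exists_isClopen_of_connectedComponent_subset
    (isClosed_frontier.preimage continuous_subtype_val).isOpen_compl (x := ⟨y, hy⟩) <| by
      intro p hp hpfr
      refine hdisj ⟨p, ?_, hpfr⟩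
      rw [connectedComponentIn_eq_image hy]
      exact mem_image_of_mem _ hp
  have hVint : Subtype.val '' V ⊆ interior N := by
    rintro _ ⟨p, hp, rfl⟩
    by_contra hint
    exact hVU hp (hN.frontier_eq ▸ ⟨p.2, hint⟩)
  obtain ⟨W, hW, rfl⟩ := isOpen_induced_iff.mp hV.isOpen
  have hVopen : IsOpen (Subtype.val '' (Subtype.val ⁻¹' W : Set N)) := by
    rw [Subtype.image_preimage_coe] at hVint ⊢
    rw [← inter_eq_right.mpr hVint, ← inter_assoc, inter_eq_left.mpr interior_subset]
    exact isOpen_interior.inter hW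
  have hVclosed : IsClosed (Subtype.val '' (Subtype.val ⁻¹' W : Set N)) :=
    (hV.isClosed.isCompact.image continuous_subtype_val).isClosed
  refine hNU (eq_univ_of_univ_subset ?_)
  rw [← (IsClopen.eq_univ ⟨hVclosed, hVopen⟩ ⟨y, ⟨_, hyV, rfl⟩⟩)]
  exact image_subset_iff.mpr fun p _ => p.2

end Components

theorem add_mem_uIcc_or_sub_mem_uIcc {a b c d : ℝ} (ha : |a - c| < d) (hb : d ≤ |b - c|) :
    c + d ∈ uIcc a b ∨ c - d ∈ uIcc a b := by
  rw [abs_lt] at ha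
  rcases le_abs'.mp hb with hb | hb
  · exact Or.inr (uIcc_comm a b ▸ mem_uIcc_of_le (by linarith) (by linarith))
  · exact Or.inl (mem_uIcc_of_le (by linarith) (by linarith))

def LocallyInjectsIntoReal (X : Type*) [TopologicalSpace X] : Prop :=
  ∀ x : X, ∃ V ∈ 𝓝 x, ∃ g : X → ℝ, ContinuousOn g V ∧ InjOn g V

section Continuum

variable {X : Type*} [TopologicalSpace X] [CompactSpace X] [T2Space X] [PreconnectedSpace X]

theorem connectedComponentIn_mem_nhds_of_injOn {N : Set X} {x : X} (hN : IsClosed N)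
    (hNx : N ∈ 𝓝 x) {g : X → ℝ} (hg : ContinuousOn g N) (hinj : InjOn g N) :
    connectedComponentIn N x ∈ 𝓝 x := by
  by_cases hNU : N = univ
  · simp [hNU, connectedComponentIn_univ, PreconnectedSpace.connectedComponent_eq_univ]
  obtain ⟨η, hη, hηfr⟩ : ∃ η, 0 < η ∧ ∀ b ∈ frontier N, η ≤ |g b - g x| := by
    refine isClosed_frontier.isCompact.exists_forall_le'
      ((hg.mono hN.frontier_subset).sub continuousOn_const).abs fun b hb => abs_pos.mpr ?_
    refine sub_ne_zero.mpr fun hgb => ?_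
    have hbx := hinj (hN.frontier_subset hb) (mem_of_mem_nhds hNx) hgb
    exact hb.2 (hbx ▸ mem_interior_iff_mem_nhds.mpr hNx)
  set S := N ∩ g ⁻¹' {g x + η, g x - η}
  have hS : S.Finite :=
    Finite.of_finite_image ((toFinite _).subset (image_subset_iff.mpr inter_subset_right))
      (hinj.mono inter_subset_left)
  have hreach : ∀ᶠ y in 𝓝 x, ∃ z ∈ S, z ∈ connectedComponentIn N y := by
    have hgx : ∀ᶠ y in 𝓝 x, |g y - g x| < η :=
      (hg.continuousAt hNx).eventually (Metric.ball_mem_nhds (g x) hη)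
    filter_upwards [hNx, hgx] with y hy hgy
    obtain ⟨b, hbK, hbfr⟩ := connectedComponentIn_inter_frontier_nonempty hN hNU hy
    have hK : OrdConnected (g '' connectedComponentIn N y) :=
      isPreconnected_iff_ordConnected.mp <| isPreconnected_connectedComponentIn.image g
        (hg.mono (connectedComponentIn_subset N y))
    rcases add_mem_uIcc_or_sub_mem_uIcc hgy (hηfr b hbfr) with ht | ht <;>
    obtain ⟨z, hzK, hgz⟩ := hK.uIcc_subset (mem_image_of_mem g (mem_connectedComponentIn hy))
      (mem_image_of_mem g hbK) ht <;>
    exact ⟨z, ⟨connectedComponentIn_subset N y hzK, by simp [hgz]⟩, hzK⟩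
  have hstay : ∀ᶠ y in 𝓝 x, ∀ z ∈ S, z ∈ connectedComponentIn N y → z ∈ connectedComponentIn N x :=
    (eventually_all_finite hS).mpr fun z _ => eventually_mem_connectedComponentIn_imp hN x z
  filter_upwards [hNx, hreach, hstay] with y hy ⟨z, hzS, hzy⟩ hyx
  rw [connectedComponentIn_eq (hyx z hzS hzy), ← connectedComponentIn_eq hzy]
  exact mem_connectedComponentIn hy

theorem LocallyInjectsIntoReal.locallyConnectedSpace (h : LocallyInjectsIntoReal X) :
    LocallyConnectedSpace X := by
  refine locallyConnectedSpace_iff_connected_subsets.mpr fun x U hU => ?_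
  obtain ⟨V, hV, g, hg, hinj⟩ := h x
  obtain ⟨N, hNx, hN, hNsub⟩ := exists_mem_nhds_isClosed_subset (inter_mem hU hV)
  exact ⟨_, connectedComponentIn_mem_nhds_of_injOn hN hNx (hg.mono (hNsub.trans inter_subset_right))
    (hinj.mono (hNsub.trans inter_subset_right)), isPreconnected_connectedComponentIn,
    (connectedComponentIn_subset N x).trans (hNsub.trans inter_subset_left)⟩

end Continuum

theorem LocallyInjectsIntoReal.of_locallyInjective {X Y : Type*} [TopologicalSpace X]
    [TopologicalSpace Y] (hY : LocallyInjectsIntoReal Y) {f : X → Y} (hf : Continuous f)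
    (hli : ∀ x, ∃ O ∈ 𝓝 x, InjOn f O) : LocallyInjectsIntoReal X := by
  intro x
  obtain ⟨O, hO, hinj⟩ := hli x
  obtain ⟨V, hV, g, hg, hginj⟩ := hY (f x)
  exact ⟨O ∩ f ⁻¹' V, inter_mem hO (hf.continuousAt hV), g ∘ f,
    hg.comp hf.continuousOn fun _ hy => hy.2,
    hginj.comp (hinj.mono inter_subset_left) fun _ hy => hy.2⟩

theorem injOn_arg_mul_sphere {c : ℂ} (hc : c ≠ 0) :
    InjOn (fun z => Complex.arg (z * c)) (sphere (0 : ℂ) 1) := by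
  intro z hz w hw h
  have hnorm : ‖z * c‖ = ‖w * c‖ := by
    rw [norm_mul, norm_mul, mem_sphere_zero_iff_norm.mp hz, mem_sphere_zero_iff_norm.mp hw]
  exact mul_right_cancel₀ hc (Complex.ext_norm_arg hnorm h)

theorem locallyInjectsIntoReal_sphere : LocallyInjectsIntoReal (sphere (0 : ℂ) 1) := by
  intro u
  have hu : ‖(u : ℂ)‖ = 1 := mem_sphere_zero_iff_norm.mp u.2
  set c := starRingEnd ℂ (u : ℂ)
  have hc : c ≠ 0 := by simp [c, ← norm_ne_zero_iff, hu]
  have hmul : Continuous fun z : sphere (0 : ℂ) 1 => (z : ℂ) * c := by fun_prop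
  have huc : (u : ℂ) * c ∈ Complex.slitPlane := by
    rw [Complex.mul_conj, Complex.normSq_eq_norm_sq, hu]
    exact Complex.ofReal_mem_slitPlane.mpr (by norm_num)
  refine ⟨_, hmul.continuousAt.preimage_mem_nhds (Complex.isOpen_slitPlane.mem_nhds huc),
    fun z => Complex.arg ((z : ℂ) * c), fun z hz => ?_, ?_⟩
  · exact (ContinuousAt.comp (x := z) (Complex.continuousAt_arg hz)
      hmul.continuousAt).continuousWithinAt
  · exact fun z _ w _ h => Subtype.ext (injOn_arg_mul_sphere hc z.2 w.2 h)

theorem stmt7_general {X : Type*} [MetricSpace X] [CompactSpace X] [ConnectedSpace X]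
    (f : X → Metric.sphere (0 : ℂ) 1) (hf : Continuous f)
    (hli : ∀ x : X, ∃ O : Set X, IsOpen O ∧ x ∈ O ∧ Set.InjOn f O) :
    LocallyConnectedSpace X :=
  (locallyInjectsIntoReal_sphere.of_locallyInjective hf fun x =>
    let ⟨O, hO, hxO, hinj⟩ := hli x
    ⟨O, hO.mem_nhds hxO, hinj⟩).locallyConnectedSpace

/-- A locally injective continuous surjection from a metrizable continuum onto
the circle forces the domain to be locally connected. -/
theorem stmt7 {X : Type*} [MetricSpace X] [CompactSpace X] [ConnectedSpace X] [Nonempty X]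
    (f : X → Metric.sphere (0 : ℂ) 1) (hf : Continuous f)
    (hsurj : Function.Surjective f)
    (hli : ∀ x : X, ∃ O : Set X, IsOpen O ∧ x ∈ O ∧ Set.InjOn f O) :
    LocallyConnectedSpace X :=
  stmt7_general f hf hli
end

section
/- Let X be a continuum and suppose that for every open cover 𝒰 of X of cardinality at most 3 there exists a 𝒰-map from X onto a continuum of covering dimension at most 1. Then X has covering dimension at most 1. -/
/-- The order of a family of sets is at most `k`: every subfamily with nonempty
intersection has at most `k` members. -/
def CovOrderLE {X : Type*} (V : Set (Set X)) (k : ℕ) : Prop :=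
  ∀ F ⊆ V, (⋂₀ F).Nonempty → F.ncard ≤ k

/-- Covering dimension ≤ n: every finite open cover admits a finite open refinement of
order ≤ n + 1. -/
def CovDimLE (X : Type*) [TopologicalSpace X] (n : ℕ) : Prop :=
  ∀ 𝒰 : Set (Set X), 𝒰.Finite → (∀ u ∈ 𝒰, IsOpen u) → ⋃₀ 𝒰 = Set.univ →
    ∃ 𝒱 : Set (Set X), 𝒱.Finite ∧ (∀ v ∈ 𝒱, IsOpen v) ∧ ⋃₀ 𝒱 = Set.univ ∧
      (∀ v ∈ 𝒱, ∃ u ∈ 𝒰, v ⊆ u) ∧ CovOrderLE 𝒱 (n + 1)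

open Set

section Aux

variable {X : Type*} [TopologicalSpace X] [CompactSpace X]

/-- The property: every open cover with at most 3 members admits a finite open refinement of
order at most 2. -/
def Refine3 (X : Type*) [TopologicalSpace X] : Prop :=
  ∀ 𝒰 : Set (Set X), 𝒰.Finite → 𝒰.ncard ≤ 3 → (∀ u ∈ 𝒰, IsOpen u) → ⋃₀ 𝒰 = Set.univ →
    ∃ 𝒲 : Set (Set X), 𝒲.Finite ∧ (∀ w ∈ 𝒲, IsOpen w) ∧ ⋃₀ 𝒲 = Set.univ ∧
      (∀ w ∈ 𝒲, ∃ u ∈ 𝒰, w ⊆ u) ∧ CovOrderLE 𝒲 2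

/-- From the 𝒰-map hypothesis we get `Refine3`. -/
lemma refine3_of_hyp
    (h : ∀ 𝒰 : Set (Set X), 𝒰.Finite → 𝒰.ncard ≤ 3 → (∀ u ∈ 𝒰, IsOpen u) →
      ⋃₀ 𝒰 = Set.univ →
      ∃ (K : Type) (tK : TopologicalSpace K), @CompactSpace K tK ∧ @T2Space K tK ∧
        @ConnectedSpace K tK ∧ @CovDimLE K tK 1 ∧
        ∃ f : X → K, @Continuous X K _ tK f ∧ Function.Surjective f ∧
          ∃ 𝒱 : Set (Set K), (∀ v ∈ 𝒱, @IsOpen K tK v) ∧ ⋃₀ 𝒱 = Set.univ ∧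
            ∀ v ∈ 𝒱, ∃ u ∈ 𝒰, f ⁻¹' v ⊆ u) :
    Refine3 X := by
  intro 𝒰 hfin hcard hopen hcov
  obtain ⟨K, tK, hK1, hK2, hK3, hdim, f, hf, hfs, 𝒱, hVopen, hVcov, hVref⟩ :=
    h 𝒰 hfin hcard hopen hcov
  -- extract a finite subcover of 𝒱
  have hcompact : IsCompact (Set.univ : Set K) := @isCompact_univ K tK hK1
  obtain ⟨T, hT⟩ := hcompact.elim_finite_subcover (fun v : 𝒱 => (v : Set K))
    (fun v => hVopen v v.2) (by rw [← sUnion_eq_iUnion, hVcov])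
  set 𝒱₀ : Set (Set K) := (fun v : 𝒱 => (v : Set K)) '' (T : Set 𝒱) with h𝒱₀
  have h𝒱₀sub : 𝒱₀ ⊆ 𝒱 := by rintro v ⟨w, _, rfl⟩; exact w.2
  have h𝒱₀cov : ⋃₀ 𝒱₀ = Set.univ := by
    apply Set.eq_univ_of_univ_subset
    intro x hx
    obtain ⟨v, hv1, hv2⟩ := Set.mem_iUnion₂.1 (hT hx)
    exact ⟨v, ⟨v, hv1, rfl⟩, hv2⟩
  obtain ⟨𝒲, hWfin, hWopen, hWcov, hWref, hWord⟩ :=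
    hdim 𝒱₀ ((T : Set 𝒱).toFinite.image _) (fun v hv => hVopen v (h𝒱₀sub hv)) h𝒱₀cov
  refine ⟨(fun w => f ⁻¹' w) '' 𝒲, hWfin.image _, ?_, ?_, ?_, ?_⟩
  · rintro v ⟨w, hw, rfl⟩
    exact (hWopen w hw).preimage hf
  · apply Set.eq_univ_of_univ_subset
    intro x _
    have : f x ∈ ⋃₀ 𝒲 := by rw [hWcov]; trivial
    obtain ⟨w, hw, hxw⟩ := this
    exact ⟨f ⁻¹' w, ⟨w, hw, rfl⟩, hxw⟩
  · rintro v ⟨w, hw, rfl⟩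
    obtain ⟨v', hv', hwv'⟩ := hWref w hw
    obtain ⟨u, hu, huv⟩ := hVref v' (h𝒱₀sub hv')
    exact ⟨u, hu, (Set.preimage_mono hwv').trans huv⟩
  · -- order ≤ 2
    intro F hF ⟨x, hx⟩
    set G : Set (Set K) := {w ∈ 𝒲 | f ⁻¹' w ∈ F} with hG
    have hGsub : G ⊆ 𝒲 := fun w hw => hw.1
    have hFG : F ⊆ (fun w => f ⁻¹' w) '' G := by
      intro v hv
      obtain ⟨w, hw, rfl⟩ := hF hv
      exact ⟨w, ⟨hw, hv⟩, rfl⟩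
    have hGne : (⋂₀ G).Nonempty := by
      refine ⟨f x, fun w hw => ?_⟩
      exact hx _ hw.2
    have hG2 : G.ncard ≤ 2 := hWord G hGsub hGne
    have hGfin : G.Finite := hWfin.subset hGsub
    calc F.ncard ≤ ((fun w => f ⁻¹' w) '' G).ncard :=
          Set.ncard_le_ncard hFG (hGfin.image _)
      _ ≤ G.ncard := Set.ncard_image_le hGfin
      _ ≤ 2 := hG2

/-- Kill the intersection over one 3-element index set. -/
lemma kill_one (hr : Refine3 X) {k : ℕ} (U : Fin k → Set X) (hopen : ∀ i, IsOpen (U i))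
    (hcov : ⋃ i, U i = Set.univ) (H : Finset (Fin k)) (hH : H.card = 3) :
    ∃ U' : Fin k → Set X, (∀ i, IsOpen (U' i)) ∧ (∀ i, U' i ⊆ U i) ∧
      (⋃ i, U' i = Set.univ) ∧ ⋂ i ∈ H, U' i = ∅ := by
  classical
  obtain ⟨a, b, c, hab, hac, hbc, rfl⟩ := Finset.card_eq_three.1 hH
  set W : Set X := ⋃ j ∈ ({a, b, c} : Finset (Fin k))ᶜ, U j with hW
  have hWopen : IsOpen W := isOpen_biUnion fun j _ => hopen j
  set 𝒜 : Set (Set X) := {U a ∪ W, U b ∪ W, U c ∪ W} with h𝒜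
  have h𝒜fin : 𝒜.Finite := (Set.finite_singleton _).insert _ |>.insert _
  have h𝒜card : 𝒜.ncard ≤ 3 := by
    calc 𝒜.ncard ≤ ({U b ∪ W, U c ∪ W} : Set (Set X)).ncard + 1 :=
          Set.ncard_insert_le _ _
      _ ≤ (({U c ∪ W} : Set (Set X)).ncard + 1) + 1 := by
          have := Set.ncard_insert_le (U b ∪ W) ({U c ∪ W} : Set (Set X))
          omega
      _ ≤ 3 := by rw [Set.ncard_singleton]
  have h𝒜open : ∀ u ∈ 𝒜, IsOpen u := by
    rintro u (rfl | rfl | rfl) <;> exact (hopen _).union hWopen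
  have h𝒜cov : ⋃₀ 𝒜 = Set.univ := by
    apply Set.eq_univ_of_univ_subset
    intro x _
    have hx : x ∈ ⋃ i, U i := by rw [hcov]; trivial
    obtain ⟨i, hi⟩ := Set.mem_iUnion.1 hx
    by_cases hiH : i ∈ ({a, b, c} : Finset (Fin k))
    · rcases Finset.mem_insert.1 hiH with rfl | hiH
      · exact ⟨U i ∪ W, by simp [h𝒜], Or.inl hi⟩
      rcases Finset.mem_insert.1 hiH with rfl | hiH
      · exact ⟨U i ∪ W, by simp [h𝒜], Or.inl hi⟩
      · rw [Finset.mem_singleton] at hiH; subst hiH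
        exact ⟨U i ∪ W, by simp [h𝒜], Or.inl hi⟩
    · have hxW : x ∈ W := Set.mem_biUnion (Finset.mem_compl.2 hiH) hi
      exact ⟨U a ∪ W, by simp [h𝒜], Or.inr hxW⟩
  obtain ⟨𝒲, hWfin, hWo, hWcov, hWref, hWord⟩ := hr 𝒜 h𝒜fin h𝒜card h𝒜open h𝒜cov
  -- assignment of members of 𝒲 to a, b, or c
  set g : Set X → Fin k := fun w => if w ⊆ U a ∪ W then a else if w ⊆ U b ∪ W then b else c
    with hg
  have hgmem : ∀ w, g w ∈ ({a, b, c} : Finset (Fin k)) := by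
    intro w
    simp only [hg]
    split_ifs <;> simp
  have hgsub : ∀ w ∈ 𝒲, w ⊆ U (g w) ∪ W := by
    intro w hw
    obtain ⟨u, hu, hwu⟩ := hWref w hw
    simp only [hg]
    split_ifs with h1 h2
    · exact h1
    · exact h2
    · rcases hu with rfl | rfl | rfl
      · exact absurd hwu h1
      · exact absurd hwu h2
      · exact hwu
  set V : Fin k → Set X := fun i => ⋃₀ {w ∈ 𝒲 | g w = i} with hV
  have hVopen : ∀ i, IsOpen (V i) := fun i => isOpen_sUnion fun w hw => hWo w hw.1
  set U₂ : Fin k → Set X := fun i => if i ∈ ({a, b, c} : Finset (Fin k)) then U i ∩ V i else U i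
    with hU₂
  have hU₂eval : ∀ i, U₂ i = if i ∈ ({a, b, c} : Finset (Fin k)) then U i ∩ V i else U i :=
    fun i => rfl
  refine ⟨U₂, ?_, ?_, ?_, ?_⟩
  · intro i
    rw [hU₂eval]
    split_ifs
    · exact (hopen i).inter (hVopen i)
    · exact hopen i
  · intro i
    rw [hU₂eval]
    split_ifs
    · exact Set.inter_subset_left
    · exact le_refl _
  · apply Set.eq_univ_of_univ_subset
    intro x _
    by_cases hxj : ∃ j ∉ ({a, b, c} : Finset (Fin k)), x ∈ U j
    · obtain ⟨j, hj1, hj2⟩ := hxj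
      exact Set.mem_iUnion.2 ⟨j, by rw [hU₂eval, if_neg hj1]; exact hj2⟩
    · push_neg at hxj
      have hxW : x ∉ W := by
        intro hxW
        obtain ⟨j, hj, hxj'⟩ := Set.mem_iUnion₂.1 hxW
        exact hxj j (Finset.mem_compl.1 hj) hxj'
      have : x ∈ ⋃₀ 𝒲 := by rw [hWcov]; trivial
      obtain ⟨w, hw, hxw⟩ := this
      have hxU : x ∈ U (g w) := by
        rcases hgsub w hw hxw with h' | h'
        · exact h'
        · exact absurd h' hxW
      have hxV : x ∈ V (g w) := ⟨w, ⟨hw, rfl⟩, hxw⟩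
      refine Set.mem_iUnion.2 ⟨g w, ?_⟩
      rw [hU₂eval, if_pos (hgmem w)]
      exact ⟨hxU, hxV⟩
  · ext x
    simp only [Set.mem_iInter, Set.mem_empty_iff_false, iff_false]
    intro hx
    have hxa := hx a (by simp)
    have hxb := hx b (by simp)
    have hxc := hx c (by simp)
    rw [hU₂eval, if_pos (by simp : a ∈ ({a,b,c} : Finset (Fin k)))] at hxa
    rw [hU₂eval, if_pos (by simp : b ∈ ({a,b,c} : Finset (Fin k)))] at hxb
    rw [hU₂eval, if_pos (by simp : c ∈ ({a,b,c} : Finset (Fin k)))] at hxc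
    obtain ⟨wa, ⟨hwa, hga⟩, hxwa⟩ := hxa.2
    obtain ⟨wb, ⟨hwb, hgb⟩, hxwb⟩ := hxb.2
    obtain ⟨wc, ⟨hwc, hgc⟩, hxwc⟩ := hxc.2
    have h1 : wa ≠ wb := fun e => hab (by rw [← hga, ← hgb, e])
    have h2 : wa ≠ wc := fun e => hac (by rw [← hga, ← hgc, e])
    have h3 : wb ≠ wc := fun e => hbc (by rw [← hgb, ← hgc, e])
    have hsub : ({wa, wb, wc} : Set (Set X)) ⊆ 𝒲 := by
      rintro w (rfl | rfl | rfl) <;> assumption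
    have hne : (⋂₀ ({wa, wb, wc} : Set (Set X))).Nonempty := by
      refine ⟨x, ?_⟩
      rintro w (rfl | rfl | rfl) <;> assumption
    have := hWord _ hsub hne
    rw [Set.ncard_eq_three.2 ⟨wa, wb, wc, h1, h2, h3, rfl⟩] at this
    omega

/-- Kill the intersections over all 3-element index sets in `s`. -/
lemma kill_all (hr : Refine3 X) {k : ℕ} (s : Finset (Finset (Fin k))) (U : Fin k → Set X)
    (hopen : ∀ i, IsOpen (U i)) (hcov : ⋃ i, U i = Set.univ) :
    ∃ U' : Fin k → Set X, (∀ i, IsOpen (U' i)) ∧ (∀ i, U' i ⊆ U i) ∧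
      (⋃ i, U' i = Set.univ) ∧ ∀ H ∈ s, H.card = 3 → ⋂ i ∈ H, U' i = ∅ := by
  classical
  induction s using Finset.induction_on with
  | empty => exact ⟨U, hopen, fun i => le_refl _, hcov, by simp⟩
    | @insert H s hHs ih =>
    obtain ⟨U₁, h1, h2, h3, h4⟩ := ih
    by_cases hc : H.card = 3
    · obtain ⟨U₂, g1, g2, g3, g4⟩ := kill_one hr U₁ h1 h3 H hc
      refine ⟨U₂, g1, fun i => (g2 i).trans (h2 i), g3, ?_⟩
      intro H' hH' hc'
      rcases Finset.mem_insert.1 hH' with rfl | hH'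
      · exact g4
      · have := h4 H' hH' hc'
        apply Set.eq_empty_of_subset_empty
        rw [← this]
        exact Set.iInter₂_mono fun i _ => g2 i
    · refine ⟨U₁, h1, h2, h3, ?_⟩
      intro H' hH' hc'
      rcases Finset.mem_insert.1 hH' with rfl | hH'
      · exact absurd hc' hc
      · exact h4 H' hH' hc'

end Aux

/-- If for every open cover of a continuum X with at most 3 members there
is a 𝒰-map onto a continuum of covering dimension ≤ 1, then X has covering dimension
≤ 1. -/
theorem stmt12 {X : Type*} [TopologicalSpace X] [CompactSpace X] [T2Space X]
    [ConnectedSpace X]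
    (h : ∀ 𝒰 : Set (Set X), 𝒰.Finite → 𝒰.ncard ≤ 3 → (∀ u ∈ 𝒰, IsOpen u) →
      ⋃₀ 𝒰 = Set.univ →
      ∃ (K : Type) (tK : TopologicalSpace K), @CompactSpace K tK ∧ @T2Space K tK ∧
        @ConnectedSpace K tK ∧ @CovDimLE K tK 1 ∧
        ∃ f : X → K, @Continuous X K _ tK f ∧ Function.Surjective f ∧
          ∃ 𝒱 : Set (Set K), (∀ v ∈ 𝒱, @IsOpen K tK v) ∧ ⋃₀ 𝒱 = Set.univ ∧
            ∀ v ∈ 𝒱, ∃ u ∈ 𝒰, f ⁻¹' v ⊆ u) :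
    CovDimLE X 1 := by
  classical
  have hr : Refine3 X := refine3_of_hyp h
  intro 𝒰 hfin hopen hcov
  obtain ⟨k, e, he⟩ := hfin.fin_embedding
  set U : Fin k → Set X := fun i => e i with hU
  have hrange : Set.range U = 𝒰 := he
  have hopen' : ∀ i, IsOpen (U i) := fun i => hopen _ (hrange ▸ Set.mem_range_self i)
  have hcov' : ⋃ i, U i = Set.univ := by
    rw [← Set.sUnion_range, hrange, hcov]
  obtain ⟨U', h1, h2, h3, h4⟩ := kill_all hr Finset.univ U hopen' hcov'
  refine ⟨Set.range U', Set.finite_range _, ?_, ?_, ?_, ?_⟩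
  · rintro v ⟨i, rfl⟩; exact h1 i
  · rw [Set.sUnion_range]; exact h3
  · rintro v ⟨i, rfl⟩
    exact ⟨U i, hrange ▸ Set.mem_range_self i, h2 i⟩
  · intro F hF ⟨x, hx⟩
    by_contra hgt
    push_neg at hgt
    have h3le : 3 ≤ F.ncard := hgt
    obtain ⟨F', hF'sub, hF'card⟩ := Set.exists_subset_card_eq h3le
    obtain ⟨va, vb, vc, hab, hac, hbc, rfl⟩ := Set.ncard_eq_three.1 hF'card
    obtain ⟨ia, hia⟩ := hF (hF'sub (by simp : va ∈ ({va, vb, vc} : Set (Set X))))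
    obtain ⟨ib, hib⟩ := hF (hF'sub (by simp : vb ∈ ({va, vb, vc} : Set (Set X))))
    obtain ⟨ic, hic⟩ := hF (hF'sub (by simp : vc ∈ ({va, vb, vc} : Set (Set X))))
    have hiab : ia ≠ ib := fun e' => hab (by rw [← hia, ← hib, e'])
    have hiac : ia ≠ ic := fun e' => hac (by rw [← hia, ← hic, e'])
    have hibc : ib ≠ ic := fun e' => hbc (by rw [← hib, ← hic, e'])
    have hcard : ({ia, ib, ic} : Finset (Fin k)).card = 3 :=
      Finset.card_eq_three.2 ⟨ia, ib, ic, hiab, hiac, hibc, rfl⟩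
    have hempty := h4 {ia, ib, ic} (Finset.mem_univ _) hcard
    have hxmem : x ∈ ⋂ i ∈ ({ia, ib, ic} : Finset (Fin k)), U' i := by
      simp only [Set.mem_iInter]
      intro i hi
      rcases Finset.mem_insert.1 hi with rfl | hi
      · rw [hia]; exact hx _ (hF'sub (by simp))
      rcases Finset.mem_insert.1 hi with rfl | hi
      · rw [hib]; exact hx _ (hF'sub (by simp))
      · rw [Finset.mem_singleton] at hi; subst hi
        rw [hic]; exact hx _ (hF'sub (by simp))
    rw [hempty] at hxmem
    exact hxmem
end

section
/- Let X be a continuum such that for every open cover 𝒰 of X with |𝒰| ≤ 3 there exists a 𝒰-map from X onto a tree. Then every continuous map f : X → S¹ is null-homotopic. -/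
/-!
A map `f : X → S¹` is null-homotopic as soon as it lifts through `exp : ℝ → S¹`. Cover `S¹` by
three open half-circles and pull them back along `f`. A `𝒰`-map `g : X → K` onto a tree refines
this cover, so a partition of unity on `K` averages the centres of the half-circles into a map
`h : K → S¹` such that `f x` and `h (g x)` are never antipodal. Maps from a tree to `S¹` lift
(lift along each edge and fix the constants of integration by a potential on the vertices, which
exists because the graph is acyclic), hence `h ∘ g` lifts, and then so does `f`, because
`f / (h ∘ g)` takes values in the open right half-circle, where `arg` is continuous.
-/

/-- The geometric realization of a combinatorial graph on `Fin n`, with vertices at the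
standard basis vectors of `ℝⁿ` and edges the straight segments joining adjacent
vertices. -/
def graphRealization (n : ℕ) (G : SimpleGraph (Fin n)) : Set (Fin n → ℝ) :=
  (Set.range fun i : Fin n => fun j => if j = i then (1 : ℝ) else 0) ∪
    ⋃ (p : Fin n × Fin n) (_ : G.Adj p.1 p.2),
      segment ℝ (fun j => if j = p.1 then (1 : ℝ) else 0)
        (fun j => if j = p.2 then (1 : ℝ) else 0)

/-- A topological space is a tree if it is homeomorphic to the geometric realization of a
finite connected acyclic combinatorial graph. -/
def IsTree (K : Type*) [TopologicalSpace K] : Prop :=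
  ∃ (n : ℕ) (G : SimpleGraph (Fin n)), G.Connected ∧ G.IsAcyclic ∧
    Nonempty (K ≃ₜ graphRealization n G)

open Complex Set Topology ComplexConjugate

def HasRealLift {Y : Type*} [TopologicalSpace Y] (F : C(Y, Circle)) : Prop :=
  ∃ φ : C(Y, ℝ), Circle.exp.comp φ = F

lemma hasRealLift_of_re_pos {Y : Type*} [TopologicalSpace Y] (F : C(Y, Circle))
    (hF : ∀ y, 0 < (F y : ℂ).re) : HasRealLift F :=
  ⟨⟨fun y => arg (F y), continuous_iff_continuousAt.2 fun y =>
      (continuousAt_arg (Or.inl (hF y))).comp (f := fun y => (F y : ℂ)) (by fun_prop)⟩,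
    by ext1 y; exact Circle.exp_arg (F y)⟩

namespace HasRealLift

variable {Y Z : Type*} [TopologicalSpace Y] [TopologicalSpace Z] {F H : C(Y, Circle)}

lemma comp (hF : HasRealLift F) (g : C(Z, Y)) : HasRealLift (F.comp g) := by
  obtain ⟨φ, rfl⟩ := hF
  exact ⟨φ.comp g, rfl⟩

lemma mul (hF : HasRealLift F) (hH : HasRealLift H) : HasRealLift (F * H) := by
  obtain ⟨φ, rfl⟩ := hF
  obtain ⟨ψ, rfl⟩ := hH
  exact ⟨φ + ψ, by ext1 y; simp [Circle.exp_add]⟩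

lemma homotopic_const (hF : HasRealLift F) : F.Homotopic (ContinuousMap.const Y 1) := by
  obtain ⟨φ, rfl⟩ := hF
  have h := (ContinuousMap.Homotopic.refl Circle.exp).comp
    ⟨ContinuousMap.Homotopy.affine φ (ContinuousMap.const Y 0)⟩
  simpa [ContinuousMap.comp_const, Circle.exp_zero] using h

lemma of_re_div_pos (hH : HasRealLift H) (hpos : ∀ y, 0 < ((F y / H y : Circle) : ℂ).re) :
    HasRealLift F := by
  simpa using (hasRealLift_of_re_pos (F / H) hpos).mul hH

end HasRealLift

lemma hasRealLift_of_unitInterval (γ : C(unitInterval, Circle)) : HasRealLift γ := by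
  obtain ⟨Γ, hΓ, -⟩ :=
    Circle.isCoveringMap_exp.exists_path_lifts γ (arg (γ 0)) (Circle.exp_arg _).symm
  exact ⟨Γ, ContinuousMap.ext (congrFun hΓ)⟩

namespace SimpleGraph

variable {V : Type*} {G : SimpleGraph V}

lemma Preconnected.apply_eq_of_forall_adj {β : Type*} (hc : G.Preconnected) {f : V → β}
    (hf : ∀ u v, G.Adj u v → f u = f v) (u v : V) : f u = f v := by
  obtain ⟨p⟩ := hc u v
  induction p with
  | nil => rfl
  | cons h _ ih => exact (hf _ _ h).trans ih

lemma IsAcyclic.exists_potential {A : Type*} [AddCommGroup A] (hc : G.Connected)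
    (ha : G.IsAcyclic) (Δ : V → V → A) (hΔ : ∀ u v, G.Adj u v → Δ v u = -Δ u v) :
    ∃ α : V → A, ∀ u v, G.Adj u v → α v = α u + Δ u v := by
  classical
  obtain ⟨r⟩ := hc.nonempty
  let P : ∀ v, G.Walk r v := fun v => ((hc r v).some.toPath : G.Walk r v)
  have hP : ∀ v, (P v).IsPath := fun v => (hc r v).some.toPath.2
  let wsum : ∀ {a b : V}, G.Walk a b → A := fun p => (p.darts.map fun d => Δ d.fst d.snd).sum
  refine ⟨fun v => wsum (P v), fun u v h => ?_⟩
  by_cases hu : u ∈ (P v).support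
  · simp only [wsum]
    rw [ha.path_concat (hP u) (hP v) h hu]
    simp [Walk.darts_concat]
  · have hv := ha.mem_support_of_ne_mem_support_of_adj_of_isPath (hP u) (hP v) h hu
    simp only [wsum]
    rw [ha.path_concat (hP v) (hP u) h.symm hv]
    simp [Walk.darts_concat, hΔ u v h]

lemma IsAcyclic.exists_circle_potential (hc : G.Connected) (ha : G.IsAcyclic) (z : V → Circle)
    (Δ : V → V → ℝ) (hΔ : ∀ u v, G.Adj u v → Δ v u = -Δ u v)
    (hz : ∀ u v, G.Adj u v → z v = z u * Circle.exp (Δ u v)) :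
    ∃ α : V → ℝ, (∀ v, Circle.exp (α v) = z v) ∧ ∀ u v, G.Adj u v → α v = α u + Δ u v := by
  obtain ⟨β, hβ⟩ := ha.exists_potential hc Δ hΔ
  obtain ⟨r⟩ := hc.nonempty
  obtain ⟨θ, hθ⟩ := Circle.exp_surjective (z r / Circle.exp (β r))
  have hconst : ∀ v, z v / Circle.exp (β v) = z r / Circle.exp (β r) := fun v =>
    hc.preconnected.apply_eq_of_forall_adj (f := fun v => z v / Circle.exp (β v))
      (fun u v h => by simp [hz u v h, hβ u v h, Circle.exp_add]) v r
  refine ⟨fun v => β v + θ, fun v => ?_, fun u v h => by simp only [hβ u v h]; ring⟩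
  rw [Circle.exp_add, hθ, ← hconst v, mul_div_cancel]

end SimpleGraph

lemma exists_continuousMap_eqOn_of_finite_closed_cover {ι Y Z : Type*} [Finite ι]
    [TopologicalSpace Y] [TopologicalSpace Z] {S : ι → Set Y} (hS : ∀ i, IsClosed (S i))
    (hcov : ⋃ i, S i = univ) (ψ : ι → C(Y, Z)) (hψ : ∀ i j, ∀ y ∈ S i, y ∈ S j → ψ i y = ψ j y) :
    ∃ φ : C(Y, Z), ∀ i, ∀ y ∈ S i, φ y = ψ i y := by
  let φ := Set.liftCover S (fun i y => ψ i y) (fun i j y hi hj => hψ i j y hi hj) hcov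
  have hφ : ∀ i, ∀ y ∈ S i, φ y = ψ i y := fun i y hy => Set.liftCover_of_mem hy
  exact ⟨⟨φ, (locallyFinite_of_finite S).continuous hcov hS fun i =>
    (ψ i).continuous.continuousOn.congr (hφ i)⟩, hφ⟩

lemma isCompact_segment {E : Type*} [AddCommGroup E] [Module ℝ E] [TopologicalSpace E]
    [IsTopologicalAddGroup E] [ContinuousSMul ℝ E] (x y : E) : IsCompact (segment ℝ x y) := by
  rw [segment_eq_image_lineMap]
  exact isCompact_Icc.image AffineMap.lineMap_continuous

namespace graphRealization

def vertexPt {n : ℕ} (i : Fin n) : Fin n → ℝ := fun j => if j = i then 1 else 0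

variable {n : ℕ} {G : SimpleGraph (Fin n)} {u v w : Fin n} {y : Fin n → ℝ}

lemma vertexPt_injective : Function.Injective (vertexPt (n := n)) := by
  intro i j h
  simpa [vertexPt] using congrFun h i

lemma vertexPt_mem (w : Fin n) : vertexPt w ∈ graphRealization n G := Or.inl ⟨w, rfl⟩

lemma segment_subset (h : G.Adj u v) :
    segment ℝ (vertexPt u) (vertexPt v) ⊆ graphRealization n G :=
  fun _ hy => Or.inr (mem_iUnion₂.2 ⟨(u, v), h, hy⟩)

lemma isCompact : IsCompact (graphRealization n G) :=
  (finite_range _).isCompact.union <|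
    isCompact_iUnion fun _ => isCompact_iUnion fun _ => isCompact_segment _ _

lemma lineMap_vertexPt_apply (t : ℝ) (j : Fin n) :
    AffineMap.lineMap (vertexPt u) (vertexPt v) t j
      = (1 - t) * vertexPt u j + t * vertexPt v j := by
  simp [AffineMap.lineMap_apply_module]

lemma eq_lineMap_of_mem_segment (huv : u ≠ v) (hy : y ∈ segment ℝ (vertexPt u) (vertexPt v)) :
    y v ∈ Icc (0 : ℝ) 1 ∧ y = AffineMap.lineMap (vertexPt u) (vertexPt v) (y v) := by
  rw [segment_eq_image_lineMap] at hy
  obtain ⟨t, ht, rfl⟩ := hy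
  simp [lineMap_vertexPt_apply, vertexPt, huv.symm, ht]

lemma eq_or_eq_of_mem_segment (hy : y ∈ segment ℝ (vertexPt u) (vertexPt v)) (hw : y w ≠ 0) :
    w = u ∨ w = v := by
  rw [segment_eq_image_lineMap] at hy
  obtain ⟨t, -, rfl⟩ := hy
  by_contra! h
  simp [lineMap_vertexPt_apply, vertexPt, h.1, h.2] at hw

lemma eq_or_eq_of_vertexPt_mem_segment (hw : vertexPt w ∈ segment ℝ (vertexPt u) (vertexPt v)) :
    w = u ∨ w = v :=
  eq_or_eq_of_mem_segment hw (by simp [vertexPt])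

lemma exists_eq_vertexPt_of_mem_segment_inter {u' v' : Fin n} (huv : u < v) (huv' : u' < v')
    (hne : (u, v) ≠ (u', v')) (hy : y ∈ segment ℝ (vertexPt u) (vertexPt v))
    (hy' : y ∈ segment ℝ (vertexPt u') (vertexPt v')) : ∃ w, y = vertexPt w := by
  obtain ⟨ht, hyt⟩ := eq_lineMap_of_mem_segment huv.ne hy
  rcases ht.1.eq_or_lt with h0 | h0
  · exact ⟨u, by rw [hyt, ← h0, AffineMap.lineMap_apply_zero]⟩
  rcases ht.2.eq_or_lt with h1 | h1
  · exact ⟨v, by rw [hyt, h1, AffineMap.lineMap_apply_one]⟩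
  have hyu : y u ≠ 0 := by
    rw [hyt, lineMap_vertexPt_apply]
    simp [vertexPt, huv.ne]
    linarith
  have hu := eq_or_eq_of_mem_segment hy' hyu
  have hv := eq_or_eq_of_mem_segment hy' h0.ne'
  exfalso
  rcases hu with rfl | rfl <;> rcases hv with rfl | rfl
  exacts [lt_irrefl _ huv, hne rfl, lt_asymm huv huv', lt_irrefl _ huv]

def vertex (w : Fin n) : graphRealization n G := ⟨vertexPt w, vertexPt_mem w⟩

def edgePath (h : G.Adj u v) : C(unitInterval, graphRealization n G) :=
  ⟨fun t => ⟨AffineMap.lineMap (vertexPt u) (vertexPt v) (t : ℝ),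
    segment_subset h (lineMap_mem_segment ℝ _ _ t.2)⟩,
    (AffineMap.lineMap_continuous.comp continuous_subtype_val).subtype_mk _⟩

lemma edgePath_zero (h : G.Adj u v) : edgePath h 0 = vertex u :=
  Subtype.ext (AffineMap.lineMap_apply_zero _ _)

lemma edgePath_one (h : G.Adj u v) : edgePath h 1 = vertex v :=
  Subtype.ext (AffineMap.lineMap_apply_one _ _)

lemma exists_vertex_edge_lifts (hc : G.Connected) (ha : G.IsAcyclic)
    (F : C(graphRealization n G, Circle)) :
    ∃ (α : Fin n → ℝ) (ℓ : ∀ u v, G.Adj u v → C(unitInterval, ℝ)),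
      (∀ w, Circle.exp (α w) = F (vertex w)) ∧
      ∀ u v (h : G.Adj u v), u < v →
        Circle.exp.comp (ℓ u v h) = F.comp (edgePath h) ∧ ℓ u v h 0 = α u ∧ ℓ u v h 1 = α v := by
  classical
  choose L hL using fun u v (h : G.Adj u v) => hasRealLift_of_unitInterval (F.comp (edgePath h))
  have hLend : ∀ u v (h : G.Adj u v), Circle.exp (L u v h 0) = F (vertex u) ∧
      Circle.exp (L u v h 1) = F (vertex v) := fun u v h =>
    ⟨by simpa [edgePath_zero] using congr($(hL u v h) 0),
      by simpa [edgePath_one] using congr($(hL u v h) 1)⟩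
  let inc : Fin n → Fin n → ℝ := fun u v => if h : G.Adj u v then L u v h 1 - L u v h 0 else 0
  have hinc : ∀ u v, G.Adj u v → F (vertex v) = F (vertex u) * Circle.exp (inc u v) := by
    intro u v h
    simp [inc, h, Circle.exp_sub, (hLend u v h).1, (hLend u v h).2]
  -- orienting every edge from its smaller to its larger end makes the increments antisymmetric
  let Δ : Fin n → Fin n → ℝ := fun u v => if u < v then inc u v else -inc v u
  obtain ⟨α, hαF, hαΔ⟩ := ha.exists_circle_potential hc (fun w => F (vertex w)) Δ
    (fun u v h => by rcases h.ne.lt_or_gt with huv | huv <;> simp [Δ, huv, huv.not_gt])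
    (fun u v h => by
      rcases h.ne.lt_or_gt with huv | huv
      · simp [Δ, huv, hinc u v h]
      · simp [Δ, huv.not_gt, hinc v u h.symm, Circle.exp_neg])
  refine ⟨α, fun u v h => L u v h + ContinuousMap.const _ (α u - L u v h 0), hαF,
    fun u v h huv => ⟨?_, by simp, ?_⟩⟩
  · ext1 t
    simp [Circle.exp_add, Circle.exp_sub, hαF, (hLend u v h).1, ← hL u v h]
  · simp [hαΔ u v h, Δ, huv, inc, h]
    ring

abbrev Edge (G : SimpleGraph (Fin n)) : Type := {p : Fin n × Fin n // p.1 < p.2 ∧ G.Adj p.1 p.2}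

def piece : Fin n ⊕ Edge G → Set (graphRealization n G)
  | .inl w => {y | (y : Fin n → ℝ) = vertexPt w}
  | .inr e => {y | (y : Fin n → ℝ) ∈ segment ℝ (vertexPt e.1.1) (vertexPt e.1.2)}

lemma isClosed_piece : ∀ i, IsClosed (piece (G := G) i)
  | .inl _ => isClosed_eq continuous_subtype_val continuous_const
  | .inr _ => (isCompact_segment _ _).isClosed.preimage continuous_subtype_val

lemma iUnion_piece : ⋃ i, piece (G := G) i = univ := by
  refine eq_univ_of_forall fun y => mem_iUnion.2 ?_
  rcases y.2 with ⟨w, hw⟩ | hy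
  · exact ⟨.inl w, hw.symm⟩
  obtain ⟨⟨u, v⟩, h, hy⟩ := mem_iUnion₂.1 hy
  rcases h.ne.lt_or_gt with huv | huv
  · exact ⟨.inr ⟨(u, v), huv, h⟩, hy⟩
  · refine ⟨.inr ⟨(v, u), huv, h.symm⟩, ?_⟩
    change (y : Fin n → ℝ) ∈ segment ℝ (vertexPt v) (vertexPt u)
    rw [segment_symm]
    exact hy

theorem hasRealLift (hc : G.Connected) (ha : G.IsAcyclic) (F : C(graphRealization n G, Circle)) :
    HasRealLift F := by
  classical
  obtain ⟨α, ℓ, hαF, hℓ⟩ := exists_vertex_edge_lifts hc ha F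
  let ψ : Fin n ⊕ Edge G → C(graphRealization n G, ℝ) :=
    Sum.elim (fun w => ContinuousMap.const _ (α w))
      (fun e => (ContinuousMap.IccExtend zero_le_one (ℓ _ _ e.2.2)).comp
        ⟨fun y => (y : Fin n → ℝ) e.1.2, (continuous_apply _).comp continuous_subtype_val⟩)
  have hvert : ∀ e w y, y ∈ piece (.inr e) → (y : Fin n → ℝ) = vertexPt w → ψ (.inr e) y = α w := by
    rintro ⟨⟨u, v⟩, huv, h⟩ w y hy hyw
    have hy' : vertexPt w ∈ segment ℝ (vertexPt u) (vertexPt v) := hyw ▸ hy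
    simp only [ψ, Sum.elim_inr, ContinuousMap.comp_apply, ContinuousMap.coe_mk, hyw]
    rcases eq_or_eq_of_vertexPt_mem_segment hy' with rfl | rfl
    · simpa [vertexPt, huv.ne'] using (hℓ _ _ h huv).2.1
    · simpa [vertexPt] using (hℓ _ _ h huv).2.2
  have hagree : ∀ i j, ∀ y ∈ piece i, y ∈ piece j → ψ i y = ψ j y := by
    rintro (w | e) (w' | e') y hi hj
    · rw [vertexPt_injective (hi.symm.trans hj)]
    · exact (hvert e' w y hj hi).symm
    · exact hvert e w' y hi hj
    · by_cases hee : e = e'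
      · rw [hee]
      obtain ⟨w, hw⟩ := exists_eq_vertexPt_of_mem_segment_inter e.2.1 e'.2.1
        (fun h => hee (Subtype.ext h)) hi hj
      rw [hvert e w y hi hw, hvert e' w y hj hw]
  have hval : ∀ i, ∀ y ∈ piece i, Circle.exp (ψ i y) = F y := by
    rintro (w | ⟨⟨u, v⟩, huv, h⟩) y hy
    · rw [show y = vertex w from Subtype.ext hy]
      exact hαF w
    · obtain ⟨ht, hyt⟩ := eq_lineMap_of_mem_segment huv.ne hy
      have hy : y = edgePath h ⟨(y : Fin n → ℝ) v, ht⟩ := Subtype.ext hyt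
      simp only [ψ, Sum.elim_inr, ContinuousMap.comp_apply, ContinuousMap.coe_mk,
        ContinuousMap.coe_IccExtend, Set.IccExtend_of_mem _ _ ht]
      exact congr($((hℓ u v h huv).1) ⟨_, ht⟩).trans (congrArg F hy.symm)
  obtain ⟨φ, hφ⟩ :=
    exists_continuousMap_eqOn_of_finite_closed_cover isClosed_piece iUnion_piece ψ hagree
  refine ⟨φ, ContinuousMap.ext fun y => ?_⟩
  obtain ⟨i, hi⟩ := mem_iUnion.1 (iUnion_piece.symm ▸ mem_univ y)
  rw [ContinuousMap.comp_apply, hφ i y hi, hval i y hi]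

end graphRealization

namespace IsTree

variable {K : Type*} [TopologicalSpace K]

lemma compactSpace (hK : IsTree K) : CompactSpace K := by
  obtain ⟨n, G, -, -, ⟨e⟩⟩ := hK
  have := isCompact_iff_compactSpace.1 (graphRealization.isCompact (G := G))
  exact e.symm.compactSpace

lemma t2Space (hK : IsTree K) : T2Space K := by
  obtain ⟨n, G, -, -, ⟨e⟩⟩ := hK
  exact e.isEmbedding.t2Space

lemma hasRealLift (hK : IsTree K) (F : C(K, Circle)) : HasRealLift F := by
  obtain ⟨n, G, hc, ha, ⟨e⟩⟩ := hK
  simpa using (graphRealization.hasRealLift hc ha (F.comp e.symm)).comp (e : C(K, _))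

end IsTree

def openHalfCircle (ω : ℂ) : Set Circle := {z | 0 < ((z : ℂ) * conj ω).re}

lemma isOpen_openHalfCircle (ω : ℂ) : IsOpen (openHalfCircle ω) :=
  isOpen_lt continuous_const (by fun_prop)

-- the centres sum to zero, so the three open half-planes cover `ℂ ∖ {0}`
def halfCircleCenters : Fin 3 → ℂ := ![2, -1 + I, -1 - I]

lemma iUnion_openHalfCircle : ⋃ k, openHalfCircle (halfCircleCenters k) = univ := by
  refine eq_univ_of_forall fun z => mem_iUnion.2 ?_
  by_contra! hz
  have h0 := hz 0
  have h1 := hz 1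
  have h2 := hz 2
  simp [openHalfCircle, halfCircleCenters] at h0 h1 h2
  have hn := Circle.normSq_coe z
  rw [normSq_apply] at hn
  nlinarith

lemma convex_re_mul_conj_pos (z : ℂ) : Convex ℝ {ω : ℂ | 0 < (z * conj ω).re} :=
  convex_halfSpace_gt ⟨fun a b => by simp [mul_add], fun c a => by simp; ring⟩ 0

lemma exists_circleMap_re_div_pos {X K : Type*} [TopologicalSpace K] [NormalSpace K]
    [ParacompactSpace K] (f : X → Circle) {g : X → K} (hg : g.Surjective)
    (hloc : ∀ y, ∃ ω : ℂ, ∀ᶠ y' in 𝓝 y, ∀ x, g x = y' → 0 < ((f x : ℂ) * conj ω).re) :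
    ∃ h : C(K, Circle), ∀ x, 0 < ((f x / h (g x) : Circle) : ℂ).re := by
  have hconv : ∀ y, Convex ℝ {ω : ℂ | ∀ x, g x = y → 0 < ((f x : ℂ) * conj ω).re} := fun y => by
    simpa only [ofPred_forall] using
      convex_iInter fun x => convex_iInter fun _ => convex_re_mul_conj_pos (f x)
  obtain ⟨c, hc⟩ := exists_continuous_forall_mem_convex_of_local_const hconv hloc
  have hc0 : ∀ y, c y ≠ 0 := by
    intro y hy
    obtain ⟨x, rfl⟩ := hg y
    simpa [hy] using hc (g x) x rfl
  have hmem : ∀ y, c y / ‖c y‖ ∈ Submonoid.unitSphere ℂ := by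
    simp [Submonoid.unitSphere, hc0]
  let h : C(K, Circle) := ⟨fun y => ⟨c y / ‖c y‖, hmem y⟩,
    (c.continuous.div (by fun_prop) (by simpa using hc0)).subtype_mk hmem⟩
  refine ⟨h, fun x => ?_⟩
  have hcoe :
      ((f x / h (g x) : Circle) : ℂ) = (‖c (g x)‖⁻¹ : ℝ) * ((f x : ℂ) * conj (c (g x))) := by
    rw [div_eq_mul_inv, Circle.coe_mul, Circle.coe_inv_eq_conj]
    change (f x : ℂ) * conj (c (g x) / ‖c (g x)‖) = _
    rw [map_div₀, conj_ofReal]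
    push_cast
    ring
  rw [hcoe, re_ofReal_mul]
  exact mul_pos (inv_pos.2 (norm_pos_iff.2 (hc0 _))) (hc (g x) x rfl)

theorem stmt13_general {X : Type*} [TopologicalSpace X]
    (h : ∀ 𝒰 : Set (Set X), 𝒰.Finite → 𝒰.ncard ≤ 3 → (∀ u ∈ 𝒰, IsOpen u) →
      ⋃₀ 𝒰 = Set.univ →
      ∃ (K : Type) (tK : TopologicalSpace K), @IsTree K tK ∧
        ∃ f : X → K, @Continuous X K _ tK f ∧ Function.Surjective f ∧
          ∃ 𝒱 : Set (Set K), (∀ v ∈ 𝒱, @IsOpen K tK v) ∧ ⋃₀ 𝒱 = Set.univ ∧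
            ∀ v ∈ 𝒱, ∃ u ∈ 𝒰, f ⁻¹' v ⊆ u)
    (f : C(X, Metric.sphere (0 : ℂ) 1)) :
    ∃ c : Metric.sphere (0 : ℂ) 1,
      f.Homotopic (ContinuousMap.const X c) := by
  -- `Circle` is definitionally the unit sphere of `ℂ`
  suffices H : ∀ F : C(X, Circle), ∃ c : Circle, F.Homotopic (ContinuousMap.const X c) from H f
  intro F
  let 𝒰 := range fun k => F ⁻¹' openHalfCircle (halfCircleCenters k)
  have h𝒰card : 𝒰.ncard ≤ 3 := by
    rw [← Nat.card_coe_set_eq]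
    exact (Finite.card_range_le _).trans (by simp)
  have h𝒰open : ∀ u ∈ 𝒰, IsOpen u := by
    rintro _ ⟨k, rfl⟩
    exact (isOpen_openHalfCircle _).preimage F.continuous
  have h𝒰cov : ⋃₀ 𝒰 = univ := by
    rw [sUnion_range, ← preimage_iUnion, iUnion_openHalfCircle, preimage_univ]
  obtain ⟨K, tK, hK, g, hg, hgs, 𝒱, h𝒱open, h𝒱cov, h𝒱ref⟩ :=
    h 𝒰 (finite_range _) h𝒰card h𝒰open h𝒰cov
  have := hK.compactSpace
  have := hK.t2Space
  obtain ⟨H, hH⟩ := exists_circleMap_re_div_pos F hgs fun y => by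
    obtain ⟨v, hv, hyv⟩ := mem_sUnion.1 (h𝒱cov.symm ▸ mem_univ y)
    obtain ⟨_, ⟨k, rfl⟩, hvk⟩ := h𝒱ref v hv
    exact ⟨halfCircleCenters k, Filter.mem_of_superset ((h𝒱open v hv).mem_nhds hyv)
      fun y' hy' x hx => hvk (show g x ∈ v from hx ▸ hy')⟩
  exact ⟨1, ((hK.hasRealLift H).comp ⟨g, hg⟩ |>.of_re_div_pos hH).homotopic_const⟩

/-- If every open cover of a continuum X with at most 3 members admits a
𝒰-map onto a tree, then every continuous map from X to the circle is null-homotopic. -/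
theorem stmt13 {X : Type*} [TopologicalSpace X] [CompactSpace X] [T2Space X]
    [ConnectedSpace X]
    (h : ∀ 𝒰 : Set (Set X), 𝒰.Finite → 𝒰.ncard ≤ 3 → (∀ u ∈ 𝒰, IsOpen u) →
      ⋃₀ 𝒰 = Set.univ →
      ∃ (K : Type) (tK : TopologicalSpace K), @IsTree K tK ∧
        ∃ f : X → K, @Continuous X K _ tK f ∧ Function.Surjective f ∧
          ∃ 𝒱 : Set (Set K), (∀ v ∈ 𝒱, @IsOpen K tK v) ∧ ⋃₀ 𝒱 = Set.univ ∧
            ∀ v ∈ 𝒱, ∃ u ∈ 𝒰, f ⁻¹' v ⊆ u)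
    (f : C(X, Metric.sphere (0 : ℂ) 1)) :
    ∃ c : Metric.sphere (0 : ℂ) 1,
      f.Homotopic (ContinuousMap.const X c) :=
  stmt13_general h f
end

section
/- Let Y be a continuum irreducible between two points p and q, and let A, B be proper subcontinua with Y = A ∪ B, p ∈ A, q ∈ B. If the closure of Y \ A is disconnected, then there is a proper subcontinuum of Y containing both p and q — a contradiction; hence the closure of Y \ A is connected. -/
/-!
The point `q` cannot lie in `A`. If `closure Aᶜ` were split by disjoint closed sets `u ∋ q` and
`v`, then `A ∪ u` would still be preconnected: any separation `a, b` of it with `A ⊆ a` leaves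
`u ∩ b` clopen in `Y`, hence empty. So `A ∪ u` is a subcontinuum containing `p` and `q`, i.e.
all of `Y`, and `v` misses `Aᶜ`.
-/

open Set

section

variable {X : Type*} [TopologicalSpace X] [PreconnectedSpace X] {s u v a b : Set X}

theorem union_subset_left_of_compl_subset_union (hne : s.Nonempty) (hu : IsClosed u)
    (hv : IsClosed v) (huv : Disjoint u v) (hcov : sᶜ ⊆ u ∪ v) (ha : IsClosed a)
    (hb : IsClosed b) (hab : s ∪ u ⊆ a ∪ b) (hdisj : (s ∪ u) ∩ (a ∩ b) = ∅) (hsa : s ⊆ a) :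
    s ∪ u ⊆ a := by
  have hcompl : u ∩ b = (v ∪ a)ᶜ := by
    ext x
    have hxcov : x ∉ s → x ∈ u ∨ x ∈ v := @hcov x
    have hxab : x ∈ s ∨ x ∈ u → x ∈ a ∨ x ∈ b := @hab x
    have hxdisj : x ∈ s ∨ x ∈ u → x ∈ a → x ∉ b := fun h ha hb =>
      eq_empty_iff_forall_notMem.mp hdisj x ⟨h, ha, hb⟩
    have hxuv : x ∈ u → x ∉ v := fun h => huv.notMem_of_mem_left h
    have hxsa : x ∈ s → x ∈ a := @hsa x
    simp only [mem_inter_iff, mem_compl_iff, mem_union]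
    tauto
  have hclopen : IsClopen (u ∩ b) :=
    ⟨hu.inter hb, hcompl ▸ (hv.union ha).isOpen_compl⟩
  rcases isClopen_iff.mp hclopen with hempty | huniv
  · intro x hx
    refine (hab hx).resolve_right fun hxb => ?_
    rcases hx with hxs | hxu
    · exact eq_empty_iff_forall_notMem.mp hdisj x ⟨Or.inl hxs, hsa hxs, hxb⟩
    · exact eq_empty_iff_forall_notMem.mp hempty x ⟨hxu, hxb⟩
  · obtain ⟨x, hxs⟩ := hne
    have hxb : x ∈ b := (huniv ▸ mem_univ x : x ∈ u ∩ b).2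
    exact absurd hdisj (nonempty_iff_ne_empty.mp ⟨x, Or.inl hxs, hsa hxs, hxb⟩)

theorem IsPreconnected.union_of_compl_subset_union (hs : IsPreconnected s) (hne : s.Nonempty)
    (hu : IsClosed u) (hv : IsClosed v) (huv : Disjoint u v) (hcov : sᶜ ⊆ u ∪ v) :
    IsPreconnected (s ∪ u) := by
  rw [isPreconnected_iff_subset_of_disjoint_closed]
  intro a b ha hb hab hdisj
  have hs_ab : s ∩ (a ∩ b) = ∅ :=
    subset_empty_iff.mp (hdisj ▸ inter_subset_inter_left _ subset_union_left)
  rcases isPreconnected_iff_subset_of_disjoint_closed.mp hs a b ha hb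
    (subset_union_left.trans hab) hs_ab with hsa | hsb
  · exact .inl (union_subset_left_of_compl_subset_union hne hu hv huv hcov ha hb hab hdisj hsa)
  · refine .inr (union_subset_left_of_compl_subset_union hne hu hv huv hcov hb ha ?_ ?_ hsb)
    · rwa [union_comm b]
    · rwa [inter_comm b]

end

theorem stmt15_general {Y : Type*} [TopologicalSpace Y]
    [ConnectedSpace Y] (p q : Y)
    (hirr : ∀ C : Set Y, IsClosed C → IsPreconnected C → p ∈ C → q ∈ C → C = Set.univ)
    (A : Set Y) (hAcl : IsClosed A) (hAconn : IsPreconnected A)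
    (hAprop : A ≠ Set.univ)
    (hp : p ∈ A) :
    IsConnected (closure Aᶜ) := by
  have hqA : q ∉ A := fun hq => hAprop (hirr A hAcl hAconn hp hq)
  have closure_subset {u v : Set Y} (hu : IsClosed u) (hv : IsClosed v) (huv : Disjoint u v)
      (hcov : closure Aᶜ ⊆ u ∪ v) (hqu : q ∈ u) : closure Aᶜ ⊆ u := by
    have hAu : A ∪ u = univ := hirr _ (hAcl.union hu)
      (hAconn.union_of_compl_subset_union ⟨p, hp⟩ hu hv huv (subset_closure.trans hcov))
      (.inl hp) (.inr hqu)
    exact closure_minimal (compl_subset_iff_union.mpr hAu) hu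
  refine ⟨⟨q, subset_closure hqA⟩, ?_⟩
  rw [isPreconnected_iff_subset_of_fully_disjoint_closed isClosed_closure]
  intro u v hu hv hcov huv
  rcases hcov (subset_closure hqA) with hqu | hqv
  · exact .inl (closure_subset hu hv huv hcov hqu)
  · exact .inr (closure_subset hv hu huv.symm (union_comm u v ▸ hcov) hqv)

/-- If a continuum Y is irreducible between p and q, and Y = A ∪ B with A, B
proper subcontinua, p ∈ A, q ∈ B, then the closure of Y \ A is connected. -/
theorem stmt15 {Y : Type*} [TopologicalSpace Y] [CompactSpace Y] [T2Space Y]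
    [ConnectedSpace Y] (p q : Y)
    (hirr : ∀ C : Set Y, IsClosed C → IsPreconnected C → p ∈ C → q ∈ C → C = Set.univ)
    (A B : Set Y) (hAcl : IsClosed A) (hAconn : IsPreconnected A)
    (hBcl : IsClosed B) (hBconn : IsPreconnected B)
    (hAprop : A ≠ Set.univ) (hBprop : B ≠ Set.univ) (hAB : A ∪ B = Set.univ)
    (hp : p ∈ A) (hq : q ∈ B) :
    IsConnected (closure Aᶜ) :=
  stmt15_general p q hirr A hAcl hAconn hAprop hp
end
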